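/- Let p* > 0 and p : ℝᵖ → ℝ with 0 < p(θ̂) ≤ p* for θ̂ in a neighborhood U of θ*, F : ℝᵖ → ℝᵖ with F(U) ⊆ U, d ≥ 0 satisfying log p(F(θ̂)) ≥ log p(θ̂) + d(F(θ̂), θ̂), and suppose there exists μ ∈ (0,1) with p(θ̂) ≥ p* · exp(−d(F(θ̂), θ̂)/(1 − μ)) for all θ̂ ∈ U. Then for the iterates θ̂_k = F^[k](θ̂_0) with θ̂_0 ∈ U, log p* − log p(θ̂_k) ≤ (log p* − log p(θ̂_0)) · μ^k for all k. -/

import Mathlib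

/-!
With `V θ = log p* - log p(θ)`, the lower bound on `p` gives `(1 - μ) V(θ) ≤ d(F θ, θ)` while
EM ascent gives `V(F θ) ≤ V(θ) - d(F θ, θ)`; together `V(F θ) ≤ μ V(θ)` on the invariant set `U`,
and iterating yields the geometric decay.
-/

open Real Set

theorem le_mul_pow_of_forall_le_mul {α R : Type*} [CommSemiring R] [PartialOrder R]
    [IsOrderedRing R] {f : α → α} {s : Set α} (hs : MapsTo f s s) {V : α → R} {μ : R}
    (hμ : 0 ≤ μ) (hV : ∀ x ∈ s, V (f x) ≤ μ * V x) {x : α} (hx : x ∈ s) (k : ℕ) :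
    V (f^[k] x) ≤ V x * μ ^ k := by
  induction k with
  | zero => simp
  | succ k ih =>
    calc V (f^[k + 1] x) = V (f (f^[k] x)) := by rw [Function.iterate_succ_apply']
      _ ≤ μ * V (f^[k] x) := hV _ (hs.iterate k hx)
      _ ≤ μ * (V x * μ ^ k) := mul_le_mul_of_nonneg_left ih hμ
      _ = V x * μ ^ (k + 1) := by ring

theorem Real.add_le_log_of_mul_exp_le {p q x : ℝ} (hp : 0 < p) (h : p * exp x ≤ q) :
    log p + x ≤ log q := by
  have hlog := log_le_log (by positivity) h
  rwa [log_mul hp.ne' (exp_ne_zero x), log_exp] at hlog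

theorem sub_le_mul_sub_of_add_le_of_sub_div_le {c a b d μ : ℝ} (hμ : μ < 1)
    (hascent : a + d ≤ b) (hcond : c - d / (1 - μ) ≤ a) : c - b ≤ μ * (c - a) := by
  have hgap : (c - a) * (1 - μ) ≤ d := (le_div_iff₀ (by linarith)).1 (by linarith)
  linarith

theorem em_qlinear_log_posterior_general {n : ℕ}
    (F : EuclideanSpace ℝ (Fin n) → EuclideanSpace ℝ (Fin n))
    (P : EuclideanSpace ℝ (Fin n) → ℝ) (pstar : ℝ) (hpstar : 0 < pstar)
    (U : Set (EuclideanSpace ℝ (Fin n)))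
    (hinv : Set.MapsTo F U U)
    (d : EuclideanSpace ℝ (Fin n) → EuclideanSpace ℝ (Fin n) → ℝ)
    (hascent : ∀ θhat ∈ U,
      Real.log (P (F θhat)) ≥ Real.log (P θhat) + d (F θhat) θhat)
    (μ : ℝ) (hμ : μ ∈ Set.Ioo (0 : ℝ) 1)
    (hcond : ∀ θhat ∈ U,
      P θhat ≥ pstar * Real.exp (-(d (F θhat) θhat) / (1 - μ))) :
    ∀ θhat0 ∈ U, ∀ k : ℕ,
      Real.log pstar - Real.log (P (F^[k] θhat0)) ≤
        (Real.log pstar - Real.log (P θhat0)) * μ ^ k := by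
  intro θhat0 hθhat0 k
  refine le_mul_pow_of_forall_le_mul (V := fun θ => log pstar - log (P θ)) hinv hμ.1.le
    (fun θ hθ => ?_) hθhat0 k
  have hlower := add_le_log_of_mul_exp_le hpstar (hcond θ hθ)
  rw [neg_div, ← sub_eq_add_neg] at hlower
  exact sub_le_mul_sub_of_add_le_of_sub_div_le hμ.2 (hascent θ hθ) hlower

/-- Quadratic/Q-linear convergence of the log-posterior (Theorem 9): under the
EM ascent property and the condition `p θ̂ ≥ p* exp(−d(F θ̂, θ̂)/(1−μ))`,
the log-posterior gap decays geometrically with rate `μ`. -/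
theorem em_qlinear_log_posterior {n : ℕ}
    (F : EuclideanSpace ℝ (Fin n) → EuclideanSpace ℝ (Fin n))
    (θstar : EuclideanSpace ℝ (Fin n))
    (P : EuclideanSpace ℝ (Fin n) → ℝ) (pstar : ℝ) (hpstar : 0 < pstar)
    (U : Set (EuclideanSpace ℝ (Fin n))) (hU : U ∈ nhds θstar)
    (hPpos : ∀ θhat ∈ U, 0 < P θhat)
    (hPle : ∀ θhat ∈ U, P θhat ≤ pstar)
    (hinv : Set.MapsTo F U U)
    (d : EuclideanSpace ℝ (Fin n) → EuclideanSpace ℝ (Fin n) → ℝ)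
    (hd : ∀ θ θ', 0 ≤ d θ θ')
    (hascent : ∀ θhat ∈ U,
      Real.log (P (F θhat)) ≥ Real.log (P θhat) + d (F θhat) θhat)
    (μ : ℝ) (hμ : μ ∈ Set.Ioo (0 : ℝ) 1)
    (hcond : ∀ θhat ∈ U,
      P θhat ≥ pstar * Real.exp (-(d (F θhat) θhat) / (1 - μ))) :
    ∀ θhat0 ∈ U, ∀ k : ℕ,
      Real.log pstar - Real.log (P (F^[k] θhat0)) ≤
        (Real.log pstar - Real.log (P θhat0)) * μ ^ k :=
  em_qlinear_log_posterior_general F P pstar hpstar U hinv d hascent μ hμ hcond
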